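/- arXiv:2408.15894 — 6 statements merged into one kernel-verified Lean document; each statement's English description precedes it below -/
import Mathlib

section
/- The relation on nodes of a finite directed graph G defined by 'u ~ v if and only if the input trees T_u and T_v are isomorphic' is an equivalence relation, and the induced partition of N_G is balanced: for any two equivalence classes C and C' and any two nodes u, v ∈ C, the number of edges from nodes of C' into u equals the number of edges from nodes of C' into v. -/
/-- A finite directed multigraph: a node type, an edge type, and source/target maps. -/
structure FinDigraph where
  V : Type
  E : Type
  [finV : Finite V]
  [finE : Finite E]
  src : E → V
  tgt : E → V

attribute [instance] FinDigraph.finV FinDigraph.finE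

namespace FinDigraph

/-- The far endpoint of a (reversed) path ending at `u`: the list `[e_k, …, e_1]`
represents the directed path `src e_k → ⋯ → tgt e_1 = u`. -/
def farEnd (G : FinDigraph) (u : G.V) : List G.E → G.V
  | [] => u
  | e :: _ => G.src e

/-- `l = [e_k, …, e_1]` is a directed path of `G` ending at `u`. -/
def IsInPath (G : FinDigraph) (u : G.V) : List G.E → Prop
  | [] => True
  | e :: es => IsInPath G u es ∧ G.tgt e = G.farEnd u es

/-- The nodes of the input tree of `u`: all directed paths ending at `u`. -/
def InPath (G : FinDigraph) (u : G.V) : Type := {l : List G.E // G.IsInPath u l}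

/-- The root of the input tree of `u` (the empty path). -/
def root (G : FinDigraph) (u : G.V) : G.InPath u := ⟨[], trivial⟩

/-- The parent of a path in the input tree (drop the farthest edge); the root is its own parent. -/
def parent (G : FinDigraph) (u : G.V) : G.InPath u → G.InPath u
  | ⟨[], h⟩ => ⟨[], h⟩
  | ⟨_ :: es, h⟩ => ⟨es, h.1⟩

/-- Isomorphism of input trees: a bijection of paths preserving root, depth and parent. -/
def InTreeIso (G : FinDigraph) (u : G.V) (H : FinDigraph) (v : H.V) : Prop :=
  ∃ F : G.InPath u ≃ H.InPath v,
    F (G.root u) = H.root v ∧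
    (∀ p, ((F p).1).length = (p.1).length) ∧
    (∀ p, F (G.parent u p) = H.parent v (F p))

/-- The reverse graph (all edges flipped). -/
def rev (G : FinDigraph) : FinDigraph :=
  { V := G.V, E := G.E, src := G.tgt, tgt := G.src }

/-- Isomorphism of output trees = isomorphism of input trees in the reverse graphs. -/
def OutTreeIso (G : FinDigraph) (u : G.V) (H : FinDigraph) (v : H.V) : Prop :=
  InTreeIso (rev G) u (rev H) v

/-- A homomorphism of directed multigraphs. -/
structure Hom (G H : FinDigraph) where
  onV : G.V → H.V
  onE : G.E → H.E
  map_src : ∀ e, H.src (onE e) = onV (G.src e)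
  map_tgt : ∀ e, H.tgt (onE e) = onV (G.tgt e)

/-- Isomorphism of directed multigraphs. -/
def IsIso (G H : FinDigraph) : Prop :=
  ∃ φ : Hom G H, Function.Bijective φ.onV ∧ Function.Bijective φ.onE

/-- Fibration equivalence of nodes: isomorphic input trees. -/
def fibEquiv (G : FinDigraph) (u v : G.V) : Prop := InTreeIso G u G v

/-- Covering equivalence of nodes: isomorphic input trees and isomorphic output trees. -/
def covEquiv (G : FinDigraph) (u v : G.V) : Prop :=
  InTreeIso G u G v ∧ OutTreeIso G u G v

/-- Orbit equivalence: some automorphism maps one node to the other. -/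
def orbitEquiv (G : FinDigraph) (u v : G.V) : Prop :=
  ∃ φ : Hom G G, Function.Bijective φ.onV ∧ Function.Bijective φ.onE ∧ φ.onV u = v

theorem inTreeIso_refl (G : FinDigraph) (u : G.V) : InTreeIso G u G u :=
  ⟨Equiv.refl _, rfl, fun _ => rfl, fun _ => rfl⟩

theorem inTreeIso_symm {G : FinDigraph} {u : G.V} {H : FinDigraph} {v : H.V}
    (h : InTreeIso G u H v) : InTreeIso H v G u := by
  obtain ⟨F, hroot, hlen, hpar⟩ := h
  refine ⟨F.symm, ?_, ?_, ?_⟩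
  · rw [← hroot, Equiv.symm_apply_apply]
  · intro p; rw [← hlen (F.symm p), Equiv.apply_symm_apply]
  · intro p
    apply F.injective
    rw [Equiv.apply_symm_apply, hpar (F.symm p), Equiv.apply_symm_apply]

theorem inTreeIso_trans {G : FinDigraph} {u : G.V} {H : FinDigraph} {v : H.V}
    {K : FinDigraph} {w : K.V}
    (h₁ : InTreeIso G u H v) (h₂ : InTreeIso H v K w) : InTreeIso G u K w := by
  obtain ⟨F, fr, fl, fp⟩ := h₁
  obtain ⟨F', gr, gl, gp⟩ := h₂
  refine ⟨F.trans F', ?_, ?_, ?_⟩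
  · simp [Equiv.trans_apply, fr, gr]
  · intro p; simp [Equiv.trans_apply, gl, fl]
  · intro p; simp [Equiv.trans_apply, fp, gp]

/-- The setoid of fibration equivalence (isomorphism of input trees). -/
def fibSetoid (G : FinDigraph) : Setoid G.V :=
  ⟨fibEquiv G, ⟨fun u => inTreeIso_refl G u, inTreeIso_symm, inTreeIso_trans⟩⟩

/-- The minimal fibration base of `G`: nodes are the fibers (input-tree isomorphism
classes), and the edges from a fiber `C'` into a fiber `C` are the edges of `G` from
nodes of `C'` into the chosen representative of `C`. -/
def base (G : FinDigraph) : FinDigraph where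
  V := Quotient (fibSetoid G)
  E := {e : G.E // G.tgt e = (Quotient.mk (fibSetoid G) (G.tgt e)).out}
  src e := Quotient.mk (fibSetoid G) (G.src e.1)
  tgt e := Quotient.mk (fibSetoid G) (G.tgt e.1)

/-- The fiber of a node, as a node of the minimal base. -/
def fibClass (G : FinDigraph) (u : G.V) : (base G).V := Quotient.mk (fibSetoid G) u

/-- A partition (given as an equivalence relation) is balanced if any two equivalent
nodes receive the same number of edges from each class. -/
def IsBalanced (G : FinDigraph) (r : G.V → G.V → Prop) : Prop :=
  Equivalence r ∧ ∀ u v, r u v → ∀ w : G.V,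
    Nat.card {e : G.E // G.tgt e = u ∧ r (G.src e) w} =
    Nat.card {e : G.E // G.tgt e = v ∧ r (G.src e) w}

/-- The multiset of states of the in-neighbors of `u` (with edge multiplicity). -/
noncomputable def inStates (G : FinDigraph) {S : Type} (x : G.V → S) (u : G.V) :
    Multiset S :=
  letI := Fintype.ofFinite G.E
  letI := Classical.decEq G.V
  (Finset.univ.filter (fun e => G.tgt e = u)).val.map fun e => x (G.src e)

end FinDigraph

/-!
An isomorphism `F : T_u ≅ T_v` of input trees sends the depth-one paths `[e]` (the edges
into `u`) bijectively to the depth-one paths of `T_v`, and it restricts to an isomorphism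
between the subtree above `[e]`, which is `T_{src e}`, and the subtree above `F [e]`. So
`F` matches the edges into `u` with those into `v` so that matched edges have sources with
isomorphic input trees.
-/

namespace FinDigraph

section Paths

variable {G : FinDigraph} {u : G.V}

lemma farEnd_append (l p : List G.E) : G.farEnd u (l ++ p) = G.farEnd (G.farEnd u p) l := by
  cases l <;> rfl

lemma isInPath_append {p : List G.E} (hp : G.IsInPath u p) {l : List G.E} :
    G.IsInPath u (l ++ p) ↔ G.IsInPath (G.farEnd u p) l := by
  induction l with
  | nil => simpa [IsInPath] using hp
  | cons e l ih => simp [IsInPath, ih, farEnd_append]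

lemma parent_iterate_val (k : ℕ) (q : G.InPath u) : ((G.parent u)^[k] q).1 = q.1.drop k := by
  induction k generalizing q with
  | zero => rfl
  | succ k ih =>
    rw [Function.iterate_succ_apply, ih]
    obtain ⟨_ | ⟨e, l⟩, h⟩ := q
    · simp [parent]
    · rfl

lemma suffix_iff_parent_iterate_eq {p q : G.InPath u} :
    p.1 <:+ q.1 ↔ (G.parent u)^[q.1.length - p.1.length] q = p := by
  rw [List.suffix_iff_eq_drop, ← parent_iterate_val]
  exact ⟨fun h => Subtype.ext h.symm, fun h => (congrArg Subtype.val h).symm⟩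

/-- Extends a path of the input tree of the far end of `p` by `p`: this identifies that input
tree with the subtree of `T_u` above `p`. -/
def graft (p : G.InPath u) (l : G.InPath (G.farEnd u p.1)) : G.InPath u :=
  ⟨l.1 ++ p.1, (isInPath_append p.2).2 l.2⟩

variable (p : G.InPath u)

lemma graft_injective : Function.Injective (G.graft p) :=
  fun _ _ h => Subtype.ext (List.append_cancel_right (congrArg Subtype.val h))

lemma length_graft (l : G.InPath (G.farEnd u p.1)) :
    (G.graft p l).1.length = l.1.length + p.1.length :=
  List.length_append

lemma graft_parent {l : G.InPath (G.farEnd u p.1)} (hl : l.1 ≠ []) :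
    G.graft p (G.parent _ l) = G.parent u (G.graft p l) := by
  obtain ⟨_ | ⟨e, l⟩, h⟩ := l
  · exact absurd rfl hl
  · rfl

lemma exists_graft_eq {q : G.InPath u} (h : p.1 <:+ q.1) : ∃ l, G.graft p l = q := by
  obtain ⟨q, hq⟩ := q
  obtain ⟨t, rfl⟩ := h
  exact ⟨⟨t, (isInPath_append p.2).1 hq⟩, rfl⟩

end Paths

section Iso

variable {G H : FinDigraph} {u : G.V} {v : H.V}

lemma suffix_iff_suffix_of_semiconj {F : G.InPath u ≃ H.InPath v}
    (hlen : ∀ p, (F p).1.length = p.1.length)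
    (hpar : Function.Semiconj F (G.parent u) (H.parent v)) {p q : G.InPath u} :
    p.1 <:+ q.1 ↔ (F p).1 <:+ (F q).1 := by
  rw [suffix_iff_parent_iterate_eq, suffix_iff_parent_iterate_eq, hlen, hlen,
    ← hpar.iterate_right _ q, F.apply_eq_iff_eq]

/-- The restriction of an input-tree isomorphism to the subtrees above `p` and above `F p`. -/
theorem inTreeIso_farEnd {F : G.InPath u ≃ H.InPath v}
    (hlen : ∀ p, (F p).1.length = p.1.length)
    (hpar : Function.Semiconj F (G.parent u) (H.parent v)) (p : G.InPath u) :
    InTreeIso G (G.farEnd u p.1) H (H.farEnd v (F p).1) := by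
  have hsuffix {q q' : G.InPath u} := suffix_iff_suffix_of_semiconj (p := q) (q := q') hlen hpar
  -- `φ l` is `F (l ++ p)` with its suffix `F p` cut off.
  choose φ hφ using fun l : G.InPath (G.farEnd u p.1) =>
    exists_graft_eq (F p) (hsuffix (q' := G.graft p l) |>.1 (List.suffix_append l.1 p.1))
  have hφ_inj : Function.Injective φ := fun l l' h =>
    graft_injective p (F.injective (by rw [← hφ, ← hφ, h]))
  have hφ_surj : Function.Surjective φ := by
    intro t
    obtain ⟨l, hl⟩ := exists_graft_eq p (q := F.symm (H.graft (F p) t))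
      (hsuffix.2 (by rw [F.apply_symm_apply]; exact List.suffix_append t.1 (F p).1))
    exact ⟨l, graft_injective (F p) (by rw [hφ, hl, F.apply_symm_apply])⟩
  have hφ_root : φ (G.root _) = H.root _ := graft_injective (F p) (hφ _)
  have hφ_len (l) : (φ l).1.length = l.1.length := by
    have h := congrArg (·.1.length) (hφ l)
    simp only [length_graft, hlen] at h
    omega
  refine ⟨Equiv.ofBijective φ ⟨hφ_inj, hφ_surj⟩, hφ_root, hφ_len, fun l => ?_⟩
  by_cases hl : l.1 = []
  · obtain rfl : l = G.root _ := Subtype.ext hl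
    show φ (G.root _) = H.parent _ (φ (G.root _))
    rw [hφ_root]
    rfl
  · have hφl : (φ l).1 ≠ [] := by rwa [← List.length_pos_iff, hφ_len, List.length_pos_iff]
    apply graft_injective (F p)
    show H.graft (F p) (φ (G.parent _ l)) = H.graft (F p) (H.parent _ (φ l))
    rw [hφ, graft_parent p hl, hpar, ← hφ, graft_parent (F p) hφl]

end Iso

lemma card_inEdges_eq_card_inPath_length_one (G : FinDigraph) (u : G.V) (P : G.V → Prop) :
    Nat.card {e : G.E // G.tgt e = u ∧ P (G.src e)} =
    Nat.card {p : G.InPath u // p.1.length = 1 ∧ P (G.farEnd u p.1)} := by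
  refine Nat.card_eq_of_bijective (fun e => ⟨⟨[e.1], trivial, e.2.1⟩, rfl, e.2.2⟩)
    ⟨fun e e' h => Subtype.ext (List.singleton_inj.1 (congrArg (·.1.1) h)), ?_⟩
  rintro ⟨⟨l, hl⟩, hlen, hP⟩
  obtain ⟨e, rfl⟩ := List.length_eq_one_iff.1 hlen
  exact ⟨⟨e, hl.2, hP⟩, rfl⟩

theorem card_inEdges_eq_of_inTreeIso {G H : FinDigraph} {u : G.V} {v : H.V}
    (h : InTreeIso G u H v) {K : FinDigraph} (w : K.V) :
    Nat.card {e : G.E // G.tgt e = u ∧ InTreeIso G (G.src e) K w} =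
    Nat.card {e : H.E // H.tgt e = v ∧ InTreeIso H (H.src e) K w} := by
  obtain ⟨F, -, hlen, hpar⟩ := h
  rw [card_inEdges_eq_card_inPath_length_one G u (InTreeIso G · K w),
    card_inEdges_eq_card_inPath_length_one H v (InTreeIso H · K w)]
  refine Nat.card_congr (F.subtypeEquiv fun p => ?_)
  have hsub := inTreeIso_farEnd hlen hpar p
  rw [hlen]
  exact and_congr_right fun _ =>
    ⟨inTreeIso_trans (inTreeIso_symm hsub), inTreeIso_trans hsub⟩

end FinDigraph

/-- input-tree isomorphism is an equivalence relation on the nodes of a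
finite directed graph, and the induced partition is balanced. -/
theorem fibEquiv_equivalence_and_balanced (G : FinDigraph) :
    Equivalence (FinDigraph.fibEquiv G) ∧
    FinDigraph.IsBalanced G (FinDigraph.fibEquiv G) :=
  ⟨(FinDigraph.fibSetoid G).iseqv, (FinDigraph.fibSetoid G).iseqv,
    fun _ _ h w => FinDigraph.card_inEdges_eq_of_inTreeIso h w⟩
end

section
/- Conversely, if a partition P of the nodes of a finite directed graph G is balanced, then any two nodes in the same class of P have isomorphic input trees. -/
namespace FinDigraphAux
open FinDigraph

variable (G : FinDigraph) (r : G.V → G.V → Prop)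

/-- Class-preserving bijection of incoming edges, from balancedness. -/
theorem sigma_exists (hbal : G.IsBalanced r) (a b : G.V) (hab : r a b) :
    Nonempty {F : {e : G.E // G.tgt e = a} ≃ {e : G.E // G.tgt e = b} //
      ∀ e, r (G.src e.1) (G.src (F e).1)} := by
  letI s : Setoid G.V := ⟨r, hbal.1⟩
  have key : ∀ c : Quotient s,
      Nonempty ({x : {e : G.E // G.tgt e = a} // Quotient.mk s (G.src x.1) = c} ≃
                {x : {e : G.E // G.tgt e = b} // Quotient.mk s (G.src x.1) = c}) := by
    intro c
    induction c using Quotient.inductionOn with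
    | h w =>
      have h1 : ∀ (z : G.V), ({x : {e : G.E // G.tgt e = z} // Quotient.mk s (G.src x.1) = Quotient.mk s w} ≃
          {e : G.E // G.tgt e = z ∧ r (G.src e) w}) := by
        intro z
        refine (Equiv.subtypeSubtypeEquivSubtypeInter (fun e => G.tgt e = z)
          (fun e => Quotient.mk s (G.src e) = Quotient.mk s w)).trans
          (Equiv.subtypeEquivRight ?_)
        intro e
        rw [Quotient.eq]
        exact and_congr_right (fun _ => Iff.rfl)
      rw [← Finite.card_eq]
      rw [Nat.card_congr (h1 a), Nat.card_congr (h1 b)]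
      exact hbal.2 a b hab w
  refine ⟨Equiv.ofFiberEquiv (f := fun x : {e : G.E // G.tgt e = a} => Quotient.mk s (G.src x.1))
      (g := fun x : {e : G.E // G.tgt e = b} => Quotient.mk s (G.src x.1))
      (fun c => Classical.choice (key c)), fun e => ?_⟩
  have h2 := Equiv.ofFiberEquiv_map (f := fun x : {e : G.E // G.tgt e = a} => Quotient.mk s (G.src x.1))
      (g := fun x : {e : G.E // G.tgt e = b} => Quotient.mk s (G.src x.1))
      (fun c => Classical.choice (key c)) e
  exact hbal.1.symm (Quotient.eq.mp h2)

variable (hbal : G.IsBalanced r)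

/-- Choice of a class-preserving bijection of incoming edges. -/
noncomputable def sigma (a b : G.V) (hab : r a b) :
    {F : {e : G.E // G.tgt e = a} ≃ {e : G.E // G.tgt e = b} //
      ∀ e, r (G.src e.1) (G.src (F e).1)} :=
  Classical.choice (sigma_exists G r hbal a b hab)

variable (a b : G.V) (hab : r a b)

/-- Translate a path ending at `a` to one ending at `b`, preserving length and
the class of the far end. -/
noncomputable def transP : (l : List G.E) → G.IsInPath a l →
    {l' : List G.E // G.IsInPath b l' ∧ l'.length = l.length ∧
      r (G.farEnd a l) (G.farEnd b l')}
  | [], _ => ⟨[], trivial, rfl, hab⟩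
  | e :: es, hl =>
    let t := transP es hl.1
    let e' := (sigma G r hbal (G.farEnd a es) (G.farEnd b t.1) t.2.2.2).1 ⟨e, hl.2⟩
    ⟨e'.1 :: t.1, ⟨t.2.1, e'.2⟩, by simp [t.2.2.1, FinDigraph.farEnd],
      (sigma G r hbal (G.farEnd a es) (G.farEnd b t.1) t.2.2.2).2 ⟨e, hl.2⟩⟩

theorem transP_inj : ∀ (l₁ l₂ : List G.E) (h₁ : G.IsInPath a l₁) (h₂ : G.IsInPath a l₂),
    (transP G r hbal a b hab l₁ h₁).1 = (transP G r hbal a b hab l₂ h₂).1 → l₁ = l₂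
  | [], [], _, _, _ => rfl
  | [], e :: es, h₁, h₂, h => by simp [transP] at h
  | e :: es, [], h₁, h₂, h => by simp [transP] at h
  | e :: es, f :: fs, h₁, h₂, h => by
    simp only [transP, List.cons.injEq] at h
    obtain ⟨hhead, htail⟩ := h
    have hes : es = fs := transP_inj es fs h₁.1 h₂.1 htail
    subst hes
    have : (⟨e, h₁.2⟩ : {e : G.E // G.tgt e = G.farEnd a es}) = ⟨f, h₂.2⟩ := by
      apply (sigma G r hbal (G.farEnd a es) (G.farEnd b (transP G r hbal a b hab es h₁.1).1)
        (transP G r hbal a b hab es h₁.1).2.2.2).1.injective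
      apply Subtype.ext
      exact hhead
    simpa using congrArg Subtype.val this

theorem transP_surj : ∀ (l' : List G.E), G.IsInPath b l' →
    ∃ (l : List G.E) (h : G.IsInPath a l), (transP G r hbal a b hab l h).1 = l'
  | [], _ => ⟨[], trivial, rfl⟩
  | e' :: l'', h' => by
    obtain ⟨l, hl, heq⟩ := transP_surj l'' h'.1
    set t := transP G r hbal a b hab l hl with ht
    have he' : G.tgt e' = G.farEnd b t.1 := by rw [heq]; exact h'.2
    obtain ⟨⟨e, he⟩, heq2⟩ := (sigma G r hbal (G.farEnd a l) (G.farEnd b t.1) t.2.2.2).1.surjective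
      ⟨e', he'⟩
    refine ⟨e :: l, ⟨hl, he⟩, ?_⟩
    simp only [transP]
    rw [List.cons.injEq]
    refine ⟨?_, heq⟩
    exact congrArg Subtype.val heq2
end FinDigraphAux

/-- if a partition of the nodes of a finite directed graph is balanced,
then any two nodes in the same class have isomorphic input trees. -/
theorem balanced_imp_inTreeIso (G : FinDigraph) (r : G.V → G.V → Prop)
    (hbal : FinDigraph.IsBalanced G r) (u v : G.V) (huv : r u v) :
    FinDigraph.InTreeIso G u G v := by
  classical
  let f : G.InPath u → G.InPath v := fun p =>
    ⟨(FinDigraphAux.transP G r hbal u v huv p.1 p.2).1,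
     (FinDigraphAux.transP G r hbal u v huv p.1 p.2).2.1⟩
  have hinj : Function.Injective f := fun p q h =>
    Subtype.ext (FinDigraphAux.transP_inj G r hbal u v huv p.1 q.1 p.2 q.2
      (congrArg Subtype.val h))
  have hsurj : Function.Surjective f := by
    intro q
    obtain ⟨l, hl, heq⟩ := FinDigraphAux.transP_surj G r hbal u v huv q.1 q.2
    exact ⟨⟨l, hl⟩, Subtype.ext heq⟩
  refine ⟨Equiv.ofBijective f ⟨hinj, hsurj⟩, ?_, ?_, ?_⟩
  · exact Subtype.ext rfl
  · intro p
    exact (FinDigraphAux.transP G r hbal u v huv p.1 p.2).2.2.1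
  · rintro ⟨l, hl⟩
    cases l with
    | nil => exact Subtype.ext rfl
    | cons e es =>
      apply Subtype.ext
      show (FinDigraphAux.transP G r hbal u v huv es hl.1).1 =
        (G.parent v ⟨(FinDigraphAux.transP G r hbal u v huv (e :: es) hl).1, _⟩).1
      simp only [FinDigraphAux.transP]
      rfl
end

section
/- There exists a finite directed graph G and two nodes u, v of G such that the input trees T_u and T_v are isomorphic, but no automorphism of G maps u to v. -/
/-!
Input trees only see incoming edges. In the graph with an isolated node `0` and a single
edge `1 → 2`, neither `0` nor `1` receives an edge, so both input trees are a bare root;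
but an automorphism is onto on edges, so it cannot move the isolated node `0` onto the
source `1` of an edge.
-/

namespace FinDigraph

theorem IsInPath.eq_nil_of_forall_tgt_ne {G : FinDigraph} {u : G.V} (hu : ∀ e, G.tgt e ≠ u) :
    ∀ {l : List G.E}, G.IsInPath u l → l = []
  | [], _ => rfl
  | e :: es, ⟨hes, he⟩ => by
    obtain rfl := IsInPath.eq_nil_of_forall_tgt_ne hu hes
    exact absurd he (hu e)

theorem InPath.eq_root_of_forall_tgt_ne {G : FinDigraph} {u : G.V} (hu : ∀ e, G.tgt e ≠ u)
    (p : G.InPath u) : p = G.root u :=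
  Subtype.ext (IsInPath.eq_nil_of_forall_tgt_ne hu p.2)

theorem inTreeIso_of_forall_tgt_ne {G H : FinDigraph} {u : G.V} {v : H.V}
    (hu : ∀ e, G.tgt e ≠ u) (hv : ∀ e, H.tgt e ≠ v) : InTreeIso G u H v := by
  refine ⟨⟨fun _ => H.root v, fun _ => G.root u, ?_, ?_⟩, rfl, ?_, fun _ => rfl⟩
  · exact fun p => (InPath.eq_root_of_forall_tgt_ne hu p).symm
  · exact fun q => (InPath.eq_root_of_forall_tgt_ne hv q).symm
  · intro p
    rw [InPath.eq_root_of_forall_tgt_ne hu p]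
    rfl

theorem orbitEquiv.exists_src_eq {G : FinDigraph} {u v : G.V} (h : G.orbitEquiv u v)
    (hv : ∃ e, G.src e = v) : ∃ e, G.src e = u := by
  obtain ⟨φ, hφV, hφE, rfl⟩ := h
  obtain ⟨e, he⟩ := hv
  obtain ⟨e', rfl⟩ := hφE.2 e
  exact ⟨e', hφV.1 ((φ.map_src e').symm.trans he)⟩

abbrev isolatedNodeAndEdge : FinDigraph where
  V := Fin 3
  E := Unit
  src _ := 1
  tgt _ := 2

end FinDigraph

/-- there is a finite directed graph with two nodes that have isomorphic
input trees but are not related by any automorphism. -/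
theorem fib_strictly_weaker_than_orbit :
    ∃ (G : FinDigraph) (u v : G.V),
      FinDigraph.InTreeIso G u G v ∧ ¬ FinDigraph.orbitEquiv G u v := by
  refine ⟨FinDigraph.isolatedNodeAndEdge, 0, 1,
    FinDigraph.inTreeIso_of_forall_tgt_ne (by decide) (by decide), fun h => ?_⟩
  obtain ⟨_, h₁₀⟩ := h.exists_src_eq ⟨(), rfl⟩
  exact absurd h₁₀ (by decide : (1 : Fin 3) ≠ 0)
end

section
/- If φ: G → B is a fibration (a graph homomorphism whose restriction to in-neighborhoods is a bijection, i.e., for each node u of G and each edge e of B with target φ(u), there is exactly one edge of G with target u mapping to e), then for every node u of G, the input tree of u in G is isomorphic to the input tree of φ(u) in B. -/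
/-- A fibration `φ : G → B`: a homomorphism such that for each node `u` of `G` and each
edge `e` of `B` ending at `φ u`, there is a unique edge of `G` ending at `u` over `e`. -/
def FinDigraph.IsFibration (G B : FinDigraph) (φ : FinDigraph.Hom G B) : Prop :=
  ∀ (u : G.V) (e : B.E), B.tgt e = φ.onV u →
    ∃! e2 : G.E, G.tgt e2 = u ∧ φ.onE e2 = e


/-!
Mapping edges by `φ` sends paths ending at `u` to paths ending at `φ u`, preserving length
and parent. Reading a path of `B` outward from `φ u`, the unique lifting property lifts it one
edge at a time, so every path of `B` ending at `φ u` has exactly one lift ending at `u`.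
-/

namespace FinDigraph.Hom

variable {G B : FinDigraph} (φ : Hom G B)

lemma farEnd_map (u : G.V) (l : List G.E) :
    B.farEnd (φ.onV u) (l.map φ.onE) = φ.onV (G.farEnd u l) := by
  cases l with
  | nil => rfl
  | cons e es => simp [farEnd, φ.map_src]

lemma isInPath_map {u : G.V} {l : List G.E} (h : G.IsInPath u l) :
    B.IsInPath (φ.onV u) (l.map φ.onE) := by
  induction l with
  | nil => trivial
  | cons e es ih => exact ⟨ih h.1, by rw [φ.map_tgt, h.2, farEnd_map]⟩

def mapInPath (u : G.V) (p : G.InPath u) : B.InPath (φ.onV u) :=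
  ⟨p.1.map φ.onE, φ.isInPath_map p.2⟩

lemma length_mapInPath (u : G.V) (p : G.InPath u) : (φ.mapInPath u p).1.length = p.1.length :=
  List.length_map _

lemma mapInPath_parent (u : G.V) (p : G.InPath u) :
    φ.mapInPath u (G.parent u p) = B.parent (φ.onV u) (φ.mapInPath u p) := by
  obtain ⟨_ | _, _⟩ := p <;> rfl

variable {φ}

lemma eq_of_map_eq_of_isInPath (hfib : IsFibration G B φ) (u : G.V) {l₁ l₂ : List G.E}
    (h₁ : G.IsInPath u l₁) (h₂ : G.IsInPath u l₂) (hmap : l₁.map φ.onE = l₂.map φ.onE) :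
    l₁ = l₂ := by
  induction l₁ generalizing l₂ with
  | nil => simpa [eq_comm] using hmap
  | cons e es ih =>
    obtain _ | ⟨f, fs⟩ := l₂
    · simp at hmap
    obtain ⟨hhead, htail⟩ := List.cons.inj hmap
    obtain rfl : es = fs := ih h₁.1 h₂.1 htail
    obtain ⟨_, _, huniq⟩ := hfib (G.farEnd u es) (φ.onE e) (by rw [φ.map_tgt, h₁.2])
    rw [huniq e ⟨h₁.2, rfl⟩, huniq f ⟨h₂.2, hhead.symm⟩]

lemma exists_map_eq_of_isInPath (hfib : IsFibration G B φ) (u : G.V) {m : List B.E}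
    (hm : B.IsInPath (φ.onV u) m) : ∃ l : List G.E, G.IsInPath u l ∧ l.map φ.onE = m := by
  induction m with
  | nil => exact ⟨[], trivial, rfl⟩
  | cons f fs ih =>
    obtain ⟨l, hl, rfl⟩ := ih hm.1
    obtain ⟨e, ⟨hetgt, rfl⟩, -⟩ := hfib (G.farEnd u l) f (by rw [hm.2, farEnd_map])
    exact ⟨e :: l, ⟨hl, hetgt⟩, rfl⟩

lemma bijective_mapInPath (hfib : IsFibration G B φ) (u : G.V) :
    Function.Bijective (φ.mapInPath u) := by
  refine ⟨fun p q hpq => Subtype.ext ?_, fun ⟨m, hm⟩ => ?_⟩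
  · exact eq_of_map_eq_of_isInPath hfib u p.2 q.2 (congrArg Subtype.val hpq)
  · obtain ⟨l, hl, rfl⟩ := exists_map_eq_of_isInPath hfib u hm
    exact ⟨⟨l, hl⟩, rfl⟩

end FinDigraph.Hom

/-- along a fibration `φ : G → B`, the input tree of every node `u` of `G`
is isomorphic to the input tree of `φ(u)` in `B`. -/
theorem fibration_inTreeIso (G B : FinDigraph) (φ : FinDigraph.Hom G B)
    (hfib : FinDigraph.IsFibration G B φ) (u : G.V) :
    FinDigraph.InTreeIso G u B (φ.onV u) :=
  ⟨Equiv.ofBijective _ (φ.bijective_mapInPath hfib u), rfl, φ.length_mapInPath u,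
    φ.mapInPath_parent u⟩
end

section
/- The iterative color refinement restricted to in-neighborhoods terminates on any finite directed graph: starting from the coloring by in-degree and repeatedly refining by the multiset of in-neighbor colors, the sequence of partitions stabilizes after at most |N_G| − 1 iterations, and the resulting stable partition is the coarsest balanced partition refining the initial coloring. -/
namespace FinDigraph

/-- The initial coloring of in-neighborhood color refinement: color by in-degree. -/
def wlInit (G : FinDigraph) (u v : G.V) : Prop :=
  Nat.card {e : G.E // G.tgt e = u} = Nat.card {e : G.E // G.tgt e = v}

/-- One refinement step: keep the current color and add the multiset of in-neighbor
colors (expressed via counts of in-edges from each current class). -/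
def refineStep (G : FinDigraph) (r : G.V → G.V → Prop) : G.V → G.V → Prop :=
  fun u v => r u v ∧ ∀ w : G.V,
    Nat.card {e : G.E // G.tgt e = u ∧ r (G.src e) w} =
    Nat.card {e : G.E // G.tgt e = v ∧ r (G.src e) w}

/-- The sequence of partitions produced by in-neighborhood color refinement. -/
def wlSeq (G : FinDigraph) : ℕ → (G.V → G.V → Prop)
  | 0 => wlInit G
  | t + 1 => refineStep G (wlSeq G t)

end FinDigraph

/-! Each round refines the previous partition, and a strict refinement raises the number of
classes, which lies between 1 and `|V|`; so some round among the first `|V| - 1` changes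
nothing, and the partition is fixed from then on. A fixed point of the refinement step is a
balanced partition. Conversely, a balanced partition `s` refining the in-degree partition
refines every round: a class of the current round is a union of `s`-classes, so the edges into
a node from it can be counted `s`-class by `s`-class, and `s`-equivalent nodes receive equally
many. -/

theorem Nat.card_subtype_eq_sum_card_fiberwise {α β : Type*} [Finite α] [Fintype β]
    (P : α → Prop) (f : α → β) :
    Nat.card {a // P a} = ∑ b, Nat.card {a // P a ∧ f a = b} := by
  rw [← Nat.card_congr (Equiv.sigmaFiberEquiv fun a : {a // P a} => f a), Nat.card_sigma]
  exact Finset.sum_congr rfl fun b _ =>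
    Nat.card_congr (Equiv.subtypeSubtypeEquivSubtypeInter P (f · = b))

theorem Quot.factor_surjective {α : Type*} {r s : α → α → Prop}
    (h : ∀ x y, r x y → s x y) : Function.Surjective (Quot.factor r s h) :=
  Quot.ind fun a => ⟨Quot.mk _ a, rfl⟩

theorem Setoid.eq_of_le_of_card_quotient_le {α : Type*} [Finite α] {s t : Setoid α} (h : s ≤ t)
    (hc : Nat.card (Quotient s) ≤ Nat.card (Quotient t)) : s = t := by
  have hinj := ((Quot.factor_surjective h).bijective_of_nat_card_le hc).injective
  refine le_antisymm h fun x y hxy => Quotient.exact (hinj ?_)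
  exact Quot.sound hxy

theorem Nat.exists_lt_apply_succ_le {f : ℕ → ℕ} {N : ℕ} (hbound : ∀ t, f t ≤ N)
    (h0 : 1 ≤ f 0) : ∃ t < N, f (t + 1) ≤ f t := by
  by_contra! hgrow
  have hlarge : ∀ t ≤ N, t + 1 ≤ f t := by
    intro t ht
    induction t with
    | zero => exact h0
    | succ t ih => have := hgrow t ht; have := ih (by omega); omega
  have := hlarge N le_rfl
  have := hbound N
  omega

theorem Setoid.exists_succ_eq_of_antitone {α : Type*} [Finite α] {s : ℕ → Setoid α}
    (hs : Antitone s) : ∃ t ≤ Nat.card α - 1, s (t + 1) = s t := by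
  cases isEmpty_or_nonempty α with
  | inl _ => exact ⟨0, Nat.zero_le _, Setoid.ext fun a => isEmptyElim a⟩
  | inr h =>
    have : Nonempty (Quotient (s 0)) := h.map (Quotient.mk _)
    obtain ⟨t, ht, hle⟩ := Nat.exists_lt_apply_succ_le (f := fun t => Nat.card (Quotient (s t)))
      (fun t => Nat.card_le_card_of_surjective _ Quotient.mk_surjective) Nat.card_pos
    exact ⟨t, by omega, Setoid.eq_of_le_of_card_quotient_le (hs t.le_succ) hle⟩

namespace FinDigraph

variable {G : FinDigraph}

theorem IsBalanced.card_inEdges_eq {s : G.V → G.V → Prop} (hs : G.IsBalanced s)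
    {A : Set G.V} (hA : ∀ a b, s a b → a ∈ A → b ∈ A) {u v : G.V} (huv : s u v) :
    Nat.card {e : G.E // G.tgt e = u ∧ G.src e ∈ A} =
      Nat.card {e : G.E // G.tgt e = v ∧ G.src e ∈ A} := by
  classical
  let S : Setoid G.V := ⟨s, hs.1⟩
  have := Fintype.ofFinite (Quotient S)
  have fiber (x w : G.V) :
      Nat.card {e : G.E // (G.tgt e = x ∧ G.src e ∈ A) ∧ Quotient.mk S (G.src e) = ⟦w⟧} =
        if w ∈ A then Nat.card {e : G.E // G.tgt e = x ∧ s (G.src e) w} else 0 := by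
    split_ifs with hw
    · refine Nat.card_congr (Equiv.subtypeEquivRight fun e => ?_)
      rw [Quotient.eq]
      exact ⟨fun ⟨⟨hx, _⟩, hsw⟩ => ⟨hx, hsw⟩,
        fun ⟨hx, hsw⟩ => ⟨⟨hx, hA _ _ (hs.1.symm hsw) hw⟩, hsw⟩⟩
    · exact Nat.card_eq_zero.2 <| .inl
        ⟨fun ⟨_, ⟨_, he⟩, hq⟩ => hw (hA _ _ (Quotient.exact hq) he)⟩
  rw [Nat.card_subtype_eq_sum_card_fiberwise _ fun e => Quotient.mk S (G.src e),
    Nat.card_subtype_eq_sum_card_fiberwise _ fun e => Quotient.mk S (G.src e)]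
  refine Finset.sum_congr rfl fun q _ => Quotient.inductionOn q fun w => ?_
  rw [fiber, fiber, hs.2 u v huv w]

theorem equivalence_refineStep {r : G.V → G.V → Prop} (hr : Equivalence r) :
    Equivalence (G.refineStep r) :=
  ⟨fun u => ⟨hr.refl u, fun _ => rfl⟩,
   fun h => ⟨hr.symm h.1, fun w => (h.2 w).symm⟩,
   fun h₁ h₂ => ⟨hr.trans h₁.1 h₂.1, fun w => (h₁.2 w).trans (h₂.2 w)⟩⟩

theorem equivalence_wlSeq (G : FinDigraph) : ∀ t, Equivalence (G.wlSeq t)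
  | 0 => ⟨fun _ => rfl, Eq.symm, Eq.trans⟩
  | t + 1 => equivalence_refineStep (equivalence_wlSeq G t)

def wlSetoid (G : FinDigraph) (t : ℕ) : Setoid G.V := ⟨G.wlSeq t, G.equivalence_wlSeq t⟩

theorem antitone_wlSetoid (G : FinDigraph) : Antitone G.wlSetoid :=
  antitone_nat_of_succ_le fun _ _ _ h => h.1

theorem wlSeq_le_wlInit (G : FinDigraph) : ∀ t, G.wlSeq t ≤ G.wlInit
  | 0 => le_rfl
  | t + 1 => fun u v h => G.wlSeq_le_wlInit t u v h.1

theorem wlSeq_eq_of_le {t : ℕ} (hstab : G.wlSeq (t + 1) = G.wlSeq t) :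
    ∀ t', t ≤ t' → G.wlSeq t' = G.wlSeq t := by
  intro t' ht
  induction t', ht using Nat.le_induction with
  | base => rfl
  | succ m _ ih => rw [wlSeq, ih, ← wlSeq, hstab]

theorem isBalanced_of_refineStep_eq {r : G.V → G.V → Prop} (hr : Equivalence r)
    (hstab : G.refineStep r = r) : G.IsBalanced r :=
  ⟨hr, fun u v huv w => by rw [← hstab] at huv; exact huv.2 w⟩

theorem IsBalanced.le_refineStep {s r : G.V → G.V → Prop} (hs : G.IsBalanced s)
    (hr : Equivalence r) (hsr : s ≤ r) : s ≤ G.refineStep r :=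
  fun u v huv => ⟨hsr u v huv, fun w => hs.card_inEdges_eq (A := {a | r a w})
    (fun a b hab ha => hr.trans (hr.symm (hsr a b hab)) ha) huv⟩

theorem IsBalanced.le_wlSeq {s : G.V → G.V → Prop} (hs : G.IsBalanced s)
    (hinit : s ≤ G.wlInit) : ∀ t, s ≤ G.wlSeq t
  | 0 => hinit
  | t + 1 => hs.le_refineStep (G.equivalence_wlSeq t) (hs.le_wlSeq hinit t)

theorem exists_wlSeq_succ_eq (G : FinDigraph) :
    ∃ t ≤ Nat.card G.V - 1, G.wlSeq (t + 1) = G.wlSeq t := by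
  obtain ⟨t, ht, hstab⟩ := Setoid.exists_succ_eq_of_antitone G.antitone_wlSetoid
  exact ⟨t, ht, congrArg (fun s : Setoid G.V => s.r) hstab⟩

end FinDigraph

/-- in-neighborhood color refinement stabilizes after at most
`|N_G| - 1` iterations, and the stable partition is the coarsest balanced partition
refining the initial (in-degree) coloring. -/
theorem wl_refinement_terminates (G : FinDigraph) :
    (∀ t, Nat.card G.V - 1 ≤ t →
      ∀ u v, FinDigraph.wlSeq G t u v ↔ FinDigraph.wlSeq G (Nat.card G.V - 1) u v) ∧
    FinDigraph.IsBalanced G (FinDigraph.wlSeq G (Nat.card G.V - 1)) ∧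
    (∀ u v, FinDigraph.wlSeq G (Nat.card G.V - 1) u v → FinDigraph.wlInit G u v) ∧
    (∀ s : G.V → G.V → Prop, FinDigraph.IsBalanced G s →
      (∀ u v, s u v → FinDigraph.wlInit G u v) →
      ∀ u v, s u v → FinDigraph.wlSeq G (Nat.card G.V - 1) u v) := by
  obtain ⟨t₀, ht₀, hstab⟩ := G.exists_wlSeq_succ_eq
  have hconst := FinDigraph.wlSeq_eq_of_le hstab
  have hfix : G.refineStep (G.wlSeq (Nat.card G.V - 1)) = G.wlSeq (Nat.card G.V - 1) := by
    rw [← FinDigraph.wlSeq, hconst _ (ht₀.trans (Nat.le_succ _)), hconst _ ht₀]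
  refine ⟨fun t ht u v => ?_,
    FinDigraph.isBalanced_of_refineStep_eq (G.equivalence_wlSeq _) hfix,
    G.wlSeq_le_wlInit _, fun s hs hinit => hs.le_wlSeq hinit _⟩
  rw [hconst t (ht₀.trans ht), hconst _ ht₀]
end

section
/- Two nodes u, v of a finite directed graph G have isomorphic input trees if and only if they have isomorphic truncated input trees of depth |N_G|. -/
namespace FinDigraph

/-- The nodes of the depth-`k` truncated input tree of `u`: paths of length at most `k`
ending at `u`. -/
def InPathLe (G : FinDigraph) (u : G.V) (k : ℕ) : Type :=
  {l : List G.E // G.IsInPath u l ∧ l.length ≤ k}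

/-- The root of the truncated input tree. -/
def rootLe (G : FinDigraph) (u : G.V) (k : ℕ) : InPathLe G u k :=
  ⟨[], trivial, Nat.zero_le k⟩

/-- The parent map of the truncated input tree. -/
def parentLe (G : FinDigraph) (u : G.V) (k : ℕ) : InPathLe G u k → InPathLe G u k
  | ⟨[], h⟩ => ⟨[], h⟩
  | ⟨_ :: es, h⟩ => ⟨es, h.1.1, le_trans (Nat.le_succ _) h.2⟩

/-- Isomorphism of depth-`k` truncated input trees. -/
def InTreeIsoLe (G : FinDigraph) (u : G.V) (H : FinDigraph) (v : H.V) (k : ℕ) : Prop :=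
  ∃ F : InPathLe G u k ≃ InPathLe H v k,
    F (rootLe G u k) = rootLe H v k ∧
    (∀ p, ((F p).1).length = (p.1).length) ∧
    (∀ p, F (parentLe G u k p) = parentLe H v k (F p))

end FinDigraph

/-!
Call two nodes depth-`k` in-bisimilar if, for `k > 0`, there is a bijection between their in-edges
matching sources that are depth-`(k-1)` in-bisimilar. Isomorphic depth-`k` truncated input trees
make their roots depth-`k` in-bisimilar. On a graph these relations form a sequence of ever finer
partitions of the nodes into at most `|N_G|` classes, so for some `K ≤ |N_G|` the depth-`K`
partition equals the depth-`(K+1)` one. That partition is then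
balanced, i.e. a bisimulation, and unfolding a bisimulation level by level gives an isomorphism of
the full input trees.
-/

namespace Setoid

theorem exists_le_succ_of_antitone {α : Type*} [Finite α] {r : ℕ → Setoid α}
    (hr : Antitone r) :
    ∃ K ≤ Nat.card α, r K ≤ r (K + 1) := by
  let f k := Nat.card (Quotient (r k))
  have hsurj : ∀ k, Function.Surjective (map_of_le (hr (Nat.le_succ k))) := fun k =>
    Quotient.ind fun a => ⟨Quotient.mk _ a, rfl⟩
  have hbound : ∀ k, f k ≤ Nat.card α := fun k =>
    Nat.card_le_card_of_surjective _ Quotient.mk_surjective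
  by_contra! hsplit
  have hstrict : ∀ K ≤ Nat.card α, f K < f (K + 1) := by
    intro K hK
    refine lt_of_le_of_ne (Nat.card_le_card_of_surjective _ (hsurj K)) fun hcard => ?_
    have hinj := ((Nat.bijective_iff_surjective_and_card _).2 ⟨hsurj K, hcard.symm⟩).1
    exact hsplit K hK (le_def.2 fun hxy => Quotient.exact (hinj (Quotient.sound hxy)))
  have hgrow : ∀ k ≤ Nat.card α + 1, k ≤ f k := by
    intro k
    induction k with
    | zero => exact fun _ => Nat.zero_le _
    | succ k ih => intro hk; have := hstrict k (by omega); have := ih (by omega); omega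
  have := hgrow _ le_rfl
  have := hbound (Nat.card α + 1)
  omega

end Setoid

namespace FinDigraph

variable {G H : FinDigraph}

abbrev InEdge (G : FinDigraph) (w : G.V) : Type := {e : G.E // G.tgt e = w}

lemma parent_val {u : G.V} (p : G.InPath u) : (G.parent u p).1 = p.1.tail := by
  obtain ⟨_ | _, _⟩ := p <;> rfl

lemma parentLe_val {u : G.V} {k : ℕ} (p : G.InPathLe u k) :
    (G.parentLe u k p).1 = p.1.tail := by
  obtain ⟨_ | _, _⟩ := p <;> rfl

theorem InTreeIso.inTreeIsoLe {u : G.V} {v : H.V} (h : InTreeIso G u H v) (k : ℕ) :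
    InTreeIsoLe G u H v k := by
  obtain ⟨F, hroot, hlen, hpar⟩ := h
  let trunc (K : FinDigraph) (w : K.V) : K.InPathLe w k ≃ {p : K.InPath w // p.1.length ≤ k} :=
    { toFun := fun p => ⟨⟨p.1, p.2.1⟩, p.2.2⟩
      invFun := fun p => ⟨p.1.1, p.1.2, p.2⟩ }
  let F' := (trunc G u).trans ((F.subtypeEquiv fun p => by rw [hlen]).trans (trunc H v).symm)
  refine ⟨F', Subtype.ext (congrArg Subtype.val hroot : _), fun p => hlen _,
    fun p => Subtype.ext ?_⟩
  have hparent : (⟨(G.parentLe u k p).1, (G.parentLe u k p).2.1⟩ : G.InPath u) =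
      G.parent u ⟨p.1, p.2.1⟩ :=
    Subtype.ext ((parentLe_val p).trans (parent_val (⟨p.1, p.2.1⟩ : G.InPath u)).symm)
  exact (congrArg (fun q => (F q).1) hparent).trans <| (congrArg Subtype.val (hpar _)).trans <|
    (parent_val _).trans (parentLe_val (F' p)).symm

def InBisimUpTo (G H : FinDigraph) : ℕ → G.V → H.V → Prop
  | 0, _, _ => True
  | k + 1, u, v =>
    ∃ β : G.InEdge u ≃ H.InEdge v,
      ∀ e : G.InEdge u, InBisimUpTo G H k (G.src e) (H.src (β e))

namespace InBisimUpTo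

theorem refl (G : FinDigraph) : ∀ k (w : G.V), InBisimUpTo G G k w w
  | 0, _ => trivial
  | k + 1, _ => ⟨Equiv.refl _, fun _ => refl G k _⟩

theorem symm : ∀ {k} {u : G.V} {v : H.V}, InBisimUpTo G H k u v → InBisimUpTo H G k v u
  | 0, _, _, _ => trivial
  | _ + 1, _, _, ⟨β, hβ⟩ => ⟨β.symm, fun e => by simpa using (hβ (β.symm e)).symm⟩

theorem trans {K : FinDigraph} : ∀ {k} {u : G.V} {v : H.V} {w : K.V},
    InBisimUpTo G H k u v → InBisimUpTo H K k v w → InBisimUpTo G K k u w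
  | 0, _, _, _, _, _ => trivial
  | _ + 1, _, _, _, ⟨β, hβ⟩, ⟨γ, hγ⟩ =>
    ⟨β.trans γ, fun e => (hβ e).trans (hγ (β e))⟩

theorem of_succ : ∀ {k} {u : G.V} {v : H.V}, InBisimUpTo G H (k + 1) u v → InBisimUpTo G H k u v
  | 0, _, _, _ => trivial
  | _ + 1, _, _, ⟨β, hβ⟩ => ⟨β, fun e => (hβ e).of_succ⟩

theorem of_le {k m : ℕ} {u : G.V} {v : H.V} (hkm : k ≤ m) (h : InBisimUpTo G H m u v) :
    InBisimUpTo G H k u v := by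
  obtain ⟨d, rfl⟩ := Nat.exists_eq_add_of_le hkm
  induction d with
  | zero => exact h
  | succ d ih => exact ih (Nat.le_add_right k d) h.of_succ

end InBisimUpTo

def inBisimSetoid (G : FinDigraph) (k : ℕ) : Setoid G.V :=
  ⟨InBisimUpTo G G k, ⟨InBisimUpTo.refl G k, InBisimUpTo.symm, InBisimUpTo.trans⟩⟩

theorem inBisimSetoid_antitone (G : FinDigraph) : Antitone G.inBisimSetoid :=
  antitone_nat_of_succ_le fun _ => Setoid.le_def.2 InBisimUpTo.of_succ

section Children

variable {u : G.V} {k : ℕ}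

-- `q ≠ p` excludes the root, which `parentLe` maps to itself.
def IsChild (p q : G.InPathLe u k) : Prop := G.parentLe u k q = p ∧ q ≠ p

def childEquiv (p : G.InPathLe u k) (hp : p.1.length < k) :
    G.InEdge (G.farEnd u p.1) ≃ {q // IsChild p q} where
  toFun e :=
    ⟨⟨e.1 :: p.1, ⟨p.2.1, e.2⟩, hp⟩, rfl, fun h => by simpa using congrArg (·.1.length) h⟩
  invFun
    | ⟨⟨e :: _, h, _⟩, hq, _⟩ =>
      ⟨e, h.2.trans (congrArg (G.farEnd u ∘ Subtype.val) hq)⟩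
    | ⟨⟨[], _, _⟩, hq, hne⟩ => absurd hq hne
  left_inv _ := rfl
  right_inv := by
    rintro ⟨⟨_ | ⟨e, es⟩, h, hl⟩, hq, hne⟩
    · exact absurd hq hne
    · exact Subtype.ext <| Subtype.ext <| congrArg (e :: ·) (congrArg Subtype.val hq).symm

end Children

theorem InTreeIsoLe.inBisimUpTo {u : G.V} {v : H.V} {k : ℕ} (h : InTreeIsoLe G u H v k) :
    InBisimUpTo G H k u v := by
  obtain ⟨F, hroot, hlen, hpar⟩ := h
  suffices ∀ j (p : G.InPathLe u k), p.1.length + j = k →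
      InBisimUpTo G H j (G.farEnd u p.1) (H.farEnd v (F p).1) by
    have := this k (G.rootLe u k) (zero_add k)
    rwa [hroot] at this
  intro j
  induction j with
  | zero => exact fun _ _ => trivial
  | succ j ih =>
    intro p hp
    have hlt : p.1.length < k := by omega
    have hlt' : (F p).1.length < k := hlen p ▸ hlt
    let children : {q // IsChild p q} ≃ {q // IsChild (F p) q} :=
      F.subtypeEquiv fun q => by
        rw [IsChild, IsChild, ← hpar, F.injective.eq_iff, F.injective.ne_iff]
    let β := (childEquiv p hlt).trans (children.trans (childEquiv (F p) hlt').symm)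
    refine ⟨β, fun e => ?_⟩
    have hchild : F (childEquiv p hlt e).1 = (childEquiv (F p) hlt' (β e)).1 := by
      simp only [β, Equiv.trans_apply, Equiv.apply_symm_apply]
      rfl
    have := ih (childEquiv p hlt e).1 (by change p.1.length + 1 + j = k; omega)
    rwa [hchild] at this

def IsInBisimulation (G H : FinDigraph) (R : G.V → H.V → Prop) : Prop :=
  ∀ u v, R u v →
    ∃ β : G.InEdge u ≃ H.InEdge v, ∀ e : G.InEdge u, R (G.src e) (H.src (β e))

def InPathOfLen (G : FinDigraph) (u : G.V) (n : ℕ) : Type :=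
  {l : List G.E // G.IsInPath u l ∧ l.length = n}

lemma InPathOfLen.eq_nil {u : G.V} (p : G.InPathOfLen u 0) : p.1 = [] :=
  List.eq_nil_of_length_eq_zero p.2.2

def inPathOfLenZeroEquiv (u : G.V) (v : H.V) : G.InPathOfLen u 0 ≃ H.InPathOfLen v 0 where
  toFun _ := ⟨[], trivial, rfl⟩
  invFun _ := ⟨[], trivial, rfl⟩
  left_inv p := Subtype.ext p.eq_nil.symm
  right_inv q := Subtype.ext q.eq_nil.symm

def inPathOfLenSuccEquiv (G : FinDigraph) (u : G.V) (n : ℕ) :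
    G.InPathOfLen u (n + 1) ≃ Σ p : G.InPathOfLen u n, G.InEdge (G.farEnd u p.1) where
  toFun
    | ⟨e :: es, h, hl⟩ => ⟨⟨es, h.1, Nat.succ.inj hl⟩, ⟨e, h.2⟩⟩
    | ⟨[], _, hl⟩ => absurd hl (Nat.succ_ne_zero n).symm
  invFun q := ⟨q.2.1 :: q.1.1, ⟨q.1.2.1, q.2.2⟩, congrArg (· + 1) q.1.2.2⟩
  left_inv := by
    rintro ⟨_ | ⟨e, es⟩, h, hl⟩
    · exact absurd hl (Nat.succ_ne_zero n).symm
    · rfl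
  right_inv _ := rfl

def inPathEquivSigma (G : FinDigraph) (u : G.V) : G.InPath u ≃ Σ n, G.InPathOfLen u n where
  toFun p := ⟨p.1.length, p.1, p.2, rfl⟩
  invFun q := ⟨q.2.1, q.2.2.1⟩
  right_inv := by rintro ⟨_, l, h, rfl⟩; rfl

def levelEquiv {R : G.V → H.V → Prop} (β : ∀ w w', R w w' → G.InEdge w ≃ H.InEdge w')
    (hβ : ∀ w w' (h : R w w') (e : G.InEdge w), R (G.src e) (H.src (β w w' h e)))
    {u : G.V} {v : H.V} (huv : R u v) : (n : ℕ) →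
    {Φ : G.InPathOfLen u n ≃ H.InPathOfLen v n //
      ∀ p, R (G.farEnd u p.1) (H.farEnd v (Φ p).1)}
  | 0 => ⟨inPathOfLenZeroEquiv u v, fun p => by rw [p.eq_nil]; exact huv⟩
  | n + 1 =>
    let Φ := levelEquiv β hβ huv n
    ⟨(G.inPathOfLenSuccEquiv u n).trans <|
        (Equiv.sigmaCongr Φ.1 fun p => β _ _ (Φ.2 p)).trans (H.inPathOfLenSuccEquiv v n).symm, by
      rintro ⟨_ | ⟨e, es⟩, h, hl⟩
      · exact absurd hl (Nat.succ_ne_zero n).symm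
      · exact hβ _ _ (Φ.2 ⟨es, h.1, Nat.succ.inj hl⟩) ⟨e, h.2⟩⟩

def inPathCongr {u : G.V} {v : H.V} (Φ : ∀ n, G.InPathOfLen u n ≃ H.InPathOfLen v n) :
    G.InPath u ≃ H.InPath v :=
  (G.inPathEquivSigma u).trans <| (Equiv.sigmaCongrRight Φ).trans (H.inPathEquivSigma v).symm

lemma inPathCongr_val {u : G.V} {v : H.V} (Φ : ∀ n, G.InPathOfLen u n ≃ H.InPathOfLen v n)
    (p : G.InPath u) : (inPathCongr Φ p).1 = (Φ p.1.length ⟨p.1, p.2, rfl⟩).1 :=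
  rfl

lemma levelEquiv_succ_tail {R : G.V → H.V → Prop}
    (β : ∀ w w', R w w' → G.InEdge w ≃ H.InEdge w')
    (hβ : ∀ w w' (h : R w w') (e : G.InEdge w), R (G.src e) (H.src (β w w' h e)))
    {u : G.V} {v : H.V} (huv : R u v) (n : ℕ) (q : G.InPathOfLen u (n + 1)) :
    ((levelEquiv β hβ huv (n + 1)).1 q).1.tail =
      ((levelEquiv β hβ huv n).1 (G.inPathOfLenSuccEquiv u n q).1).1 :=
  rfl

theorem InTreeIso.of_isInBisimulation {R : G.V → H.V → Prop} (hR : IsInBisimulation G H R)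
    {u : G.V} {v : H.V} (huv : R u v) : InTreeIso G u H v := by
  choose β hβ using hR
  let Φ n := (levelEquiv β hβ huv n).1
  have hroot : (Φ 0 ⟨[], trivial, rfl⟩).1 = [] := InPathOfLen.eq_nil _
  refine ⟨inPathCongr Φ, Subtype.ext hroot, fun p => (Φ _ _).2.2, ?_⟩
  rintro ⟨_ | ⟨e, es⟩, h⟩
  · exact Subtype.ext hroot
  · let p : G.InPath u := ⟨e :: es, h⟩
    show inPathCongr Φ (G.parent u p) = H.parent v (inPathCongr Φ p)
    apply Subtype.ext
    rw [parent_val (inPathCongr Φ p), inPathCongr_val, inPathCongr_val]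
    exact (levelEquiv_succ_tail β hβ huv es.length ⟨e :: es, h, rfl⟩).symm

end FinDigraph

/-- two nodes of a finite directed graph `G` have isomorphic input trees
iff they have isomorphic truncated input trees of depth `|N_G|`. -/
theorem inTreeIso_iff_truncated (G : FinDigraph) (u v : G.V) :
    FinDigraph.InTreeIso G u G v ↔
    FinDigraph.InTreeIsoLe G u G v (Nat.card G.V) := by
  refine ⟨fun h => h.inTreeIsoLe _, fun h => ?_⟩
  obtain ⟨K, hK, hstable⟩ := Setoid.exists_le_succ_of_antitone G.inBisimSetoid_antitone
  have hbisim : FinDigraph.IsInBisimulation G G (FinDigraph.InBisimUpTo G G K) :=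
    fun _ _ => Setoid.le_def.1 hstable
  exact .of_isInBisimulation hbisim (h.inBisimUpTo.of_le hK)
end
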